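/- arXiv:2211.09088 — 7 statements merged into one kernel-verified Lean document; each statement's English description precedes it below -/
import Mathlib

section
/- Let f : ℝ^m → ℝ be α-strongly convex and l-smooth (α ≤ l), let S be a nonempty closed convex subset of ℝ^m with minimizer η = argmin_{r ∈ S} f(r), and let 0 < γ ≤ 2/(α + l). Then for any r ∈ S, the projected gradient step satisfies ‖Π_S(r - γ ∇f(r)) - η‖ ≤ (1 - γα) ‖r - η‖. -/
open InnerProductSpace

/-- helper: if `c ≤ t * A` for all small positive `t`, then `c ≤ 0`. -/
lemma stmt6_aux_small (c A : ℝ) (hA : 0 ≤ A)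
    (h : ∀ t : ℝ, 0 < t → t ≤ 1 → c ≤ t * A) : c ≤ 0 := by
  by_contra hc
  push_neg at hc
  have ht : (0:ℝ) < min 1 (c / (2 * A + 1)) := by
    apply lt_min one_pos
    positivity
  have h2 := h _ ht (min_le_left _ _)
  have h3 : min 1 (c / (2 * A + 1)) ≤ c / (2 * A + 1) := min_le_right _ _
  have h4 : min 1 (c / (2 * A + 1)) * A ≤ (c / (2 * A + 1)) * A :=
    mul_le_mul_of_nonneg_right h3 hA
  have h5 : (c / (2 * A + 1)) * A < c := by
    rw [div_mul_eq_mul_div, div_lt_iff₀ (by positivity)]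
    nlinarith
  linarith

/-- Descent lemma: an `l`-smooth differentiable function satisfies the quadratic
upper bound. -/
lemma stmt6_descent {m : ℕ} (f : EuclideanSpace ℝ (Fin m) → ℝ) (l : ℝ) (hl : 0 ≤ l)
    (hdiff : Differentiable ℝ f)
    (hsmooth : ∀ x y : EuclideanSpace ℝ (Fin m),
      ‖gradient f x - gradient f y‖ ≤ l * ‖x - y‖) :
    ∀ x y : EuclideanSpace ℝ (Fin m),
      f y ≤ f x + (inner ℝ (gradient f x) (y - x) : ℝ) + l / 2 * ‖y - x‖ ^ 2 := by
  intro x y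
  set v := y - x with hv
  set ψ : ℝ → ℝ := fun t =>
    f (x + t • v) - t * (inner ℝ (gradient f x) v : ℝ) - l * t ^ 2 / 2 * ‖v‖ ^ 2 with hψ
  have hderiv : ∀ t : ℝ, HasDerivAt ψ
      ((inner ℝ (gradient f (x + t • v)) v : ℝ) - (inner ℝ (gradient f x) v : ℝ)
        - l * t * ‖v‖ ^ 2) t := by
    intro t
    have hc : HasDerivAt (fun t : ℝ => x + t • v) v t := by
      simpa using ((hasDerivAt_id t).smul_const v).const_add x
    have hf : HasFDerivAt f (toDual ℝ _ (gradient f (x + t • v))) (x + t • v) :=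
      hasGradientAt_iff_hasFDerivAt.mp (hdiff (x + t • v)).hasGradientAt
    have h1 : HasDerivAt (fun t : ℝ => f (x + t • v))
        (inner ℝ (gradient f (x + t • v)) v : ℝ) t := by
      exact (hf.comp_hasDerivAt t hc).congr_deriv (toDual_apply_apply)
    have h2 : HasDerivAt (fun t : ℝ => t * (inner ℝ (gradient f x) v : ℝ))
        (inner ℝ (gradient f x) v : ℝ) t := by
      simpa using (hasDerivAt_id t).mul_const (inner ℝ (gradient f x) v : ℝ)
    have h3 : HasDerivAt (fun t : ℝ => l * t ^ 2 / 2 * ‖v‖ ^ 2)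
        (l * t * ‖v‖ ^ 2) t := by
      have : HasDerivAt (fun t : ℝ => t ^ 2) (2 * t) t := by
        simpa using hasDerivAt_pow 2 t
      have := ((this.const_mul l).div_const 2).mul_const (‖v‖ ^ 2)
      exact this.congr_deriv (by ring)
    exact (h1.sub h2).sub h3
  have hanti : AntitoneOn ψ (Set.Icc (0:ℝ) 1) := by
    apply antitoneOn_of_deriv_nonpos (convex_Icc 0 1)
    · exact (Differentiable.continuous fun t => (hderiv t).differentiableAt).continuousOn
    · intro t ht
      exact (hderiv t).differentiableAt.differentiableWithinAt
    · intro t ht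
      rw [interior_Icc] at ht
      rw [(hderiv t).deriv]
      have hcs : (inner ℝ (gradient f (x + t • v)) v : ℝ)
          - (inner ℝ (gradient f x) v : ℝ)
          ≤ ‖gradient f (x + t • v) - gradient f x‖ * ‖v‖ := by
        rw [← inner_sub_left]
        exact real_inner_le_norm _ _
      have hlip := hsmooth (x + t • v) x
      have : ‖x + t • v - x‖ = t * ‖v‖ := by
        have : x + t • v - x = t • v := by abel
        rw [this, norm_smul, Real.norm_eq_abs, abs_of_pos ht.1]
      rw [this] at hlip
      nlinarith [norm_nonneg v, norm_nonneg (gradient f (x + t • v) - gradient f x),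
        mul_le_mul_of_nonneg_right hlip (norm_nonneg v)]
  have key := hanti (Set.left_mem_Icc.mpr zero_le_one)
      (Set.right_mem_Icc.mpr zero_le_one) zero_le_one
  have hxy : x + (1:ℝ) • v = y := by simp [hv]
  have hx0 : x + (0:ℝ) • v = x := by simp
  simp only [hψ, hxy, hx0] at key
  nlinarith [key]

set_option maxHeartbeats 2000000 in
/-- Projected gradient descent contraction: if `f` is `α`-strongly convex and
`l`-smooth (`α ≤ l`), `η` is the minimizer of `f` over the nonempty closed convex
set `S`, and `0 < γ ≤ 2/(α+l)`, then for any `r ∈ S` and any projection point `p ∈ S`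
of `r - γ ∇f(r)` onto `S` (i.e. a nearest point in `S`),
`‖p - η‖ ≤ (1 - γ α) ‖r - η‖`. -/
theorem stmt6 {m : ℕ} (f : EuclideanSpace ℝ (Fin m) → ℝ)
    (α l : ℝ) (hα : 0 < α) (hαl : α ≤ l)
    (hdiff : Differentiable ℝ f)
    (hstrong : ∀ x y : EuclideanSpace ℝ (Fin m),
      f y ≥ f x + (inner ℝ (gradient f x) (y - x) : ℝ) + α / 2 * ‖y - x‖ ^ 2)
    (hsmooth : ∀ x y : EuclideanSpace ℝ (Fin m),
      ‖gradient f x - gradient f y‖ ≤ l * ‖x - y‖)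
    (S : Set (EuclideanSpace ℝ (Fin m))) (hS : Convex ℝ S) (hScl : IsClosed S)
    (hSne : S.Nonempty)
    (η : EuclideanSpace ℝ (Fin m)) (hη : η ∈ S) (hηmin : ∀ s ∈ S, f η ≤ f s)
    (γ : ℝ) (hγ : 0 < γ) (hγ2 : γ ≤ 2 / (α + l))
    (r : EuclideanSpace ℝ (Fin m)) (hr : r ∈ S)
    (p : EuclideanSpace ℝ (Fin m)) (hp : p ∈ S)
    (hproj : ∀ s ∈ S, ‖r - γ • gradient f r - p‖ ≤ ‖r - γ • gradient f r - s‖) :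
    ‖p - η‖ ≤ (1 - γ * α) * ‖r - η‖ := by
  have hl : (0:ℝ) < l := lt_of_lt_of_le hα hαl
  have hdesc := stmt6_descent f l hl.le hdiff hsmooth
  -- positivity of 1 - γα
  have hαlpos : (0:ℝ) < α + l := by linarith
  have hγα : γ * α ≤ 1 := by
    have : γ * (α + l) ≤ 2 := by
      rwa [le_div_iff₀ hαlpos] at hγ2
    nlinarith
  have hrate : (0:ℝ) ≤ 1 - γ * α := by linarith
  -- variational inequality at η : ⟪∇f η, s - η⟫ ≥ 0 for s ∈ S
  have hVIη : ∀ s ∈ S, (0:ℝ) ≤ (inner ℝ (gradient f η) (s - η) : ℝ) := by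
    intro s hs
    have := stmt6_aux_small (-(inner ℝ (gradient f η) (s - η) : ℝ)) (l / 2 * ‖s - η‖ ^ 2)
      (by positivity) ?_
    · linarith
    intro t ht0 ht1
    have hmem : η + t • (s - η) ∈ S := by
      have := hS hη hs (by linarith : (0:ℝ) ≤ 1 - t) ht0.le (by ring)
      convert this using 1
      module
    have h1 := hηmin _ hmem
    have h2 := hdesc η (η + t • (s - η))
    have h3 : η + t • (s - η) - η = t • (s - η) := by abel
    rw [h3] at h2
    rw [real_inner_smul_right, norm_smul, Real.norm_eq_abs, abs_of_pos ht0] at h2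
    nlinarith [norm_nonneg (s - η), sq_nonneg t]
  -- variational inequality at p
  set x0 := r - γ • gradient f r with hx0
  have hVIp : ∀ s ∈ S, (inner ℝ (x0 - p) (s - p) : ℝ) ≤ 0 := by
    intro s hs
    have := stmt6_aux_small ((inner ℝ (x0 - p) (s - p) : ℝ)) (‖s - p‖ ^ 2 / 2)
      (by positivity) ?_
    · linarith
    intro t ht0 ht1
    have hmem : p + t • (s - p) ∈ S := by
      have := hS hp hs (by linarith : (0:ℝ) ≤ 1 - t) ht0.le (by ring)
      convert this using 1
      module
    have h1 := hproj _ hmem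
    have h2 : ‖x0 - p‖ ^ 2 ≤ ‖x0 - (p + t • (s - p))‖ ^ 2 := by
      have := hproj _ hmem
      nlinarith [norm_nonneg (x0 - p), norm_nonneg (x0 - (p + t • (s - p)))]
    have h3 : x0 - (p + t • (s - p)) = (x0 - p) - t • (s - p) := by abel
    rw [h3] at h2
    have h4 := norm_sub_sq_real (x0 - p) (t • (s - p))
    rw [real_inner_smul_right, norm_smul, Real.norm_eq_abs, abs_of_pos ht0] at h4
    nlinarith [norm_nonneg (s - p), sq_nonneg t]
  -- nonexpansiveness: ‖p - η‖ ≤ ‖(r - γ ∇f r) - (η - γ ∇f η)‖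
  set y0 := η - γ • gradient f η with hy0
  have hnon : ‖p - η‖ ≤ ‖x0 - y0‖ := by
    have h1 := hVIp η hη
    have h2 : (inner ℝ (y0 - η) (p - η) : ℝ) ≤ 0 := by
      rw [hy0]
      have : η - γ • gradient f η - η = -(γ • gradient f η) := by abel
      rw [this, inner_neg_left, real_inner_smul_left]
      have := hVIη p hp
      nlinarith
    -- ⟪x0 - p, η - p⟫ ≤ 0 and ⟪y0 - η, p - η⟫ ≤ 0
    have key : ‖p - η‖ ^ 2 ≤ (inner ℝ (x0 - y0) (p - η) : ℝ) := by
      have e1 : (inner ℝ (x0 - y0) (p - η) : ℝ)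
          = (inner ℝ (x0 - p) (p - η) : ℝ) + ‖p - η‖ ^ 2 + (inner ℝ (η - y0) (p - η) : ℝ) := by
        have : x0 - y0 = (x0 - p) + (p - η) + (η - y0) := by abel
        rw [this, inner_add_left, inner_add_left, real_inner_self_eq_norm_sq]
      have e2 : (inner ℝ (x0 - p) (p - η) : ℝ) = -(inner ℝ (x0 - p) (η - p) : ℝ) := by
        rw [show p - η = -(η - p) from by abel, inner_neg_right]
      have e3 : (inner ℝ (η - y0) (p - η) : ℝ) = -(inner ℝ (y0 - η) (p - η) : ℝ) := by
        rw [show η - y0 = -(y0 - η) from by abel, inner_neg_left]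
      rw [e1, e2, e3]
      have := hVIp η hη
      linarith
    have hcs : (inner ℝ (x0 - y0) (p - η) : ℝ) ≤ ‖x0 - y0‖ * ‖p - η‖ :=
      real_inner_le_norm _ _
    nlinarith [norm_nonneg (p - η), norm_nonneg (x0 - y0)]
  -- contraction estimate on ‖x0 - y0‖
  set w := r - η with hw
  set g := gradient f r - gradient f η with hg
  have hxyd : x0 - y0 = w - γ • g := by
    rw [hx0, hy0, hw, hg]
    module
  -- strong monotonicity and Lipschitz
  have hmono : α * ‖w‖ ^ 2 ≤ (inner ℝ g w : ℝ) := by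
    have h1 := hstrong r η
    have h2 := hstrong η r
    have e1 : (inner ℝ (gradient f η) (r - η) : ℝ) = (inner ℝ (gradient f η) w : ℝ) := by
      rw [hw]
    have e2 : (inner ℝ (gradient f r) (η - r) : ℝ) = -(inner ℝ (gradient f r) w : ℝ) := by
      rw [hw, show η - r = -(r - η) from by abel, inner_neg_right]
    have e3 : ‖η - r‖ = ‖w‖ := by rw [hw, ← norm_neg]; congr 1; abel
    rw [e2] at h1
    rw [e1] at h2
    rw [e3] at h1
    have : (inner ℝ g w : ℝ) = (inner ℝ (gradient f r) w : ℝ) - (inner ℝ (gradient f η) w : ℝ) := by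
      rw [hg, inner_sub_left]
    rw [this]
    have h2' : ‖r - η‖ = ‖w‖ := by rw [hw]
    rw [h2'] at h2
    linarith
  have hlip : ‖g‖ ≤ l * ‖w‖ := by rw [hg, hw]; exact hsmooth r η
  -- the key coercivity inequality
  have hkey : α * l * ‖w‖ ^ 2 + ‖g‖ ^ 2 ≤ (α + l) * (inner ℝ g w : ℝ) := by
    set u := g - α • w with hu
    have hgu : g = u + α • w := by rw [hu]; abel
    have hinner_gu : (inner ℝ g w : ℝ) = (inner ℝ u w : ℝ) + α * ‖w‖ ^ 2 := by
      rw [hgu, inner_add_left, real_inner_smul_left, real_inner_self_eq_norm_sq]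
    have hnorm_gu : ‖g‖ ^ 2 = ‖u‖ ^ 2 + 2 * α * (inner ℝ u w : ℝ) + α ^ 2 * ‖w‖ ^ 2 := by
      rw [hgu]
      rw [norm_add_sq_real, real_inner_smul_right, norm_smul, Real.norm_eq_abs,
        abs_of_pos hα, real_inner_comm]
      ring
    -- reduce to cocoercivity of h = f - α/2 ‖·‖²: (l - α) ⟪u, w⟫ ≥ ‖u‖²
    have hcoco : ‖u‖ ^ 2 ≤ (l - α) * (inner ℝ u w : ℝ) := by
      rcases eq_or_lt_of_le hαl with heq | hlt
      · -- α = l : u = 0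
        subst heq
        have : ‖u‖ ^ 2 ≤ 0 := by
          have := real_inner_le_norm g w
          rw [hu, norm_sub_sq_real, real_inner_smul_right, norm_smul, Real.norm_eq_abs,
            abs_of_pos hα]
          nlinarith [norm_nonneg g, norm_nonneg w, hmono, hlip,
            mul_le_mul_of_nonneg_right hlip (norm_nonneg w)]
        nlinarith [sq_nonneg ‖u‖, hmono, real_inner_le_norm u w, norm_nonneg u, norm_nonneg w]
      · -- α < l : cocoercivity argument on h
        set L := l - α with hL
        have hLpos : (0:ℝ) < L := by rw [hL]; linarith
        -- h-convexity: ∀ a b, Hconv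
        have hconv : ∀ a b : EuclideanSpace ℝ (Fin m),
            f a + (inner ℝ (gradient f a - α • a) (b - a) : ℝ) - α / 2 * ‖a‖ ^ 2
              ≤ f b - α / 2 * ‖b‖ ^ 2 := by
          intro a b
          have h1 := hstrong a b
          have e : ‖b - a‖ ^ 2 = ‖b‖ ^ 2 - 2 * (inner ℝ a b : ℝ) + ‖a‖ ^ 2 := by
            rw [norm_sub_sq_real, real_inner_comm b a]
          have e2 : (inner ℝ (gradient f a - α • a) (b - a) : ℝ)
              = (inner ℝ (gradient f a) (b - a) : ℝ) - α * ((inner ℝ a b : ℝ) - ‖a‖ ^ 2) := by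
            simp only [inner_sub_left, inner_sub_right, real_inner_smul_left,
              real_inner_self_eq_norm_sq]
            ring
          rw [e2]
          nlinarith [h1]
        have hdescH : ∀ a b : EuclideanSpace ℝ (Fin m),
            f b - α / 2 * ‖b‖ ^ 2
              ≤ f a - α / 2 * ‖a‖ ^ 2 + (inner ℝ (gradient f a - α • a) (b - a) : ℝ)
                + L / 2 * ‖b - a‖ ^ 2 := by
          intro a b
          have h1 := hdesc a b
          have e : ‖b - a‖ ^ 2 = ‖b‖ ^ 2 - 2 * (inner ℝ a b : ℝ) + ‖a‖ ^ 2 := by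
            rw [norm_sub_sq_real, real_inner_comm b a]
          have e2 : (inner ℝ (gradient f a - α • a) (b - a) : ℝ)
              = (inner ℝ (gradient f a) (b - a) : ℝ) - α * ((inner ℝ a b : ℝ) - ‖a‖ ^ 2) := by
            simp only [inner_sub_left, inner_sub_right, real_inner_smul_left,
              real_inner_self_eq_norm_sq]
            ring
          rw [e2, hL]
          nlinarith [h1]
        -- u = ∇h r - ∇h η
        have hu' : u = (gradient f r - α • r) - (gradient f η - α • η) := by
          rw [hu, hg, hw]; module
        -- one-sided bound: h b + ⟪∇h b, a - b⟫ + ‖∇h a - ∇h b‖²/(2L) ≤ h a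
        have onestep : ∀ a b : EuclideanSpace ℝ (Fin m),
            f b - α / 2 * ‖b‖ ^ 2 + (inner ℝ (gradient f b - α • b) (a - b) : ℝ)
              + ‖(gradient f a - α • a) - (gradient f b - α • b)‖ ^ 2 / (2 * L)
              ≤ f a - α / 2 * ‖a‖ ^ 2 := by
          intro a b
          set ua := gradient f a - α • a with hua
          set ub := gradient f b - α • b with hub
          set z := a - (1 / L) • (ua - ub) with hz
          have h1 := hconv b z
          have h2 := hdescH a z
          have ez1 : z - a = -((1 / L) • (ua - ub)) := by rw [hz]; abel
          have ez2 : z - b = (a - b) - (1 / L) • (ua - ub) := by rw [hz]; abel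
          have e1 : (inner ℝ ua (z - a) : ℝ) = -(1 / L) * (inner ℝ ua (ua - ub) : ℝ) := by
            rw [ez1, inner_neg_right, real_inner_smul_right]; ring
          have e2 : ‖z - a‖ ^ 2 = (1 / L) ^ 2 * ‖ua - ub‖ ^ 2 := by
            rw [ez1, norm_neg, norm_smul, Real.norm_eq_abs, abs_of_pos (by positivity),
              mul_pow]
          have e3 : (inner ℝ ub (z - b) : ℝ)
              = (inner ℝ ub (a - b) : ℝ) - (1 / L) * (inner ℝ ub (ua - ub) : ℝ) := by
            rw [ez2, inner_sub_right, real_inner_smul_right]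
          rw [e1, e2] at h2
          rw [e3] at h1
          have eq4 : (inner ℝ ua (ua - ub) : ℝ) - (inner ℝ ub (ua - ub) : ℝ)
              = ‖ua - ub‖ ^ 2 := by
            rw [← inner_sub_left, real_inner_self_eq_norm_sq]
          have eL : L / 2 * ((1 / L) ^ 2 * ‖ua - ub‖ ^ 2) = ‖ua - ub‖ ^ 2 / (2 * L) := by
            field_simp
          have e7 : -(1 / L) * (inner ℝ ua (ua - ub) : ℝ) + (1 / L) * (inner ℝ ub (ua - ub) : ℝ)
              = -(‖ua - ub‖ ^ 2 / L) := by
            have h9 : -(1 / L) * (inner ℝ ua (ua - ub) : ℝ) + (1 / L) * (inner ℝ ub (ua - ub) : ℝ)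
                = -(((inner ℝ ua (ua - ub) : ℝ) - (inner ℝ ub (ua - ub) : ℝ)) / L) := by ring
            rw [h9, eq4]
          have e8 : ‖ua - ub‖ ^ 2 / L = ‖ua - ub‖ ^ 2 / (2 * L) + ‖ua - ub‖ ^ 2 / (2 * L) := by
            field_simp; ring
          linarith [h1, h2, e7, eL, e8]
        have s1 := onestep r η
        have s2 := onestep η r
        have eu1 : (gradient f r - α • r) - (gradient f η - α • η) = u := hu'.symm
        have eu2 : (gradient f η - α • η) - (gradient f r - α • r) = -u := by
          rw [← eu1]; abel
        rw [eu1] at s1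
        rw [eu2, norm_neg] at s2
        have er : r - η = w := hw.symm
        have eη : η - r = -w := by rw [hw]; abel
        rw [er] at s1
        rw [eη, inner_neg_right] at s2
        have esum : (inner ℝ (gradient f η - α • η) w : ℝ)
            - (inner ℝ (gradient f r - α • r) w : ℝ) = -(inner ℝ u w : ℝ) := by
          have euu : (gradient f η - α • η) - (gradient f r - α • r) = -u := by
            rw [hu']; abel
          rw [← inner_sub_left, euu, inner_neg_left]
        have hL2 : (0:ℝ) < 2 * L := by linarith
        have : ‖u‖ ^ 2 / (2 * L) + ‖u‖ ^ 2 / (2 * L) ≤ (inner ℝ u w : ℝ) := by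
          linarith [s1, s2, esum]
        rw [← add_div, div_le_iff₀ hL2] at this
        nlinarith [this]
    nlinarith [hcoco, hinner_gu, hnorm_gu]
  -- ‖g‖ ≥ α ‖w‖ (squared)
  have hgl : α ^ 2 * ‖w‖ ^ 2 ≤ ‖g‖ ^ 2 := by
    have hcs := real_inner_le_norm g w
    nlinarith [hmono, norm_nonneg g, norm_nonneg w, sq_nonneg (‖g‖ - α * ‖w‖)]
  -- final contraction
  have hγ2' : γ * (α + l) ≤ 2 := by
    rwa [le_div_iff₀ hαlpos] at hγ2
  have hfin : ‖x0 - y0‖ ^ 2 ≤ (1 - γ * α) ^ 2 * ‖w‖ ^ 2 := by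
    rw [hxyd, norm_sub_sq_real, real_inner_smul_right, norm_smul, Real.norm_eq_abs,
      abs_of_pos hγ, mul_pow]
    have c1 : γ ^ 2 - 2 * γ / (α + l) ≤ 0 := by
      rw [sub_nonpos, le_div_iff₀ hαlpos]
      nlinarith [hγ2', hγ.le, sq_nonneg γ]
    -- ‖w‖² - 2γ⟪g,w⟫ + γ²‖g‖² ≤ (1-γα)²‖w‖²
    have key2 : 2 * γ / (α + l) * (α * l * ‖w‖ ^ 2 + ‖g‖ ^ 2) ≤ 2 * γ * (inner ℝ g w : ℝ) := by
      rw [div_mul_eq_mul_div, div_le_iff₀ hαlpos]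
      nlinarith [hkey, hγ.le]
    have c2 : (γ ^ 2 - 2 * γ / (α + l)) * ‖g‖ ^ 2
        ≤ (γ ^ 2 - 2 * γ / (α + l)) * (α ^ 2 * ‖w‖ ^ 2) :=
      mul_le_mul_of_nonpos_left hgl c1
    have expand : 2 * γ / (α + l) * (α * l * ‖w‖ ^ 2) + (2 * γ / (α + l)) * (α ^ 2 * ‖w‖ ^ 2)
        = 2 * γ * α * ‖w‖ ^ 2 := by
      field_simp
      ring
    nlinarith [key2, c2, expand, real_inner_comm w g]
  calc ‖p - η‖ ≤ ‖x0 - y0‖ := hnon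
    _ ≤ (1 - γ * α) * ‖r - η‖ := by
        rw [← hw]
        nlinarith [hfin, norm_nonneg (x0 - y0), norm_nonneg w, hrate,
          mul_nonneg hrate (norm_nonneg w)]
end

section
/- Let (η_t), (r_t) be sequences in ℝ^m with r_{-1} = η_{-1} = r_0 and suppose ‖r_t - η_{t-1}‖ ≤ κ ‖r_{t-1} - η_{t-1}‖ for all t ≥ 0 with κ ∈ [0,1). Then Σ_{t=0}^T ‖r_t - η_{t-1}‖ ≤ (κ/(1-κ)) Σ_{t=0}^{T-1} ‖η_t - η_{t-1}‖. -/
/-!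
Write `a t = ‖r_t - η_{t-1}‖` and `b t = ‖η_t - η_{t-1}‖`. The triangle inequality through
`η_{t-1}` turns the contraction into `a (t+1) ≤ κ (a t + b t)`, and `a 0 = 0`. Summing,
`S ≤ κ (S + B)` for `S = Σ_{t ≤ T} a t` and `B = Σ_{t < T} b t`, i.e. `(1 - κ) S ≤ κ B`.
-/

open Finset

theorem sum_range_succ_le_div_one_sub_mul_sum {a b : ℕ → ℝ} {κ : ℝ} (hκ0 : 0 ≤ κ)
    (hκ1 : κ < 1) (ha0 : a 0 = 0) (ha : ∀ t, 0 ≤ a t)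
    (hstep : ∀ t, a (t + 1) ≤ κ * (a t + b t)) (T : ℕ) :
    ∑ t ∈ range (T + 1), a t ≤ κ / (1 - κ) * ∑ t ∈ range T, b t := by
  set S := ∑ t ∈ range (T + 1), a t with hS_def
  set B := ∑ t ∈ range T, b t
  have hprefix : ∑ t ∈ range T, a t ≤ S :=
    sum_le_sum_of_subset_of_nonneg (range_subset_range.2 T.le_succ) fun t _ _ => ha t
  have hS : S ≤ κ * (S + B) :=
    calc S = ∑ t ∈ range T, a (t + 1) := by rw [hS_def, sum_range_succ', ha0, add_zero]
      _ ≤ ∑ t ∈ range T, κ * (a t + b t) := sum_le_sum fun t _ => hstep t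
      _ = κ * (∑ t ∈ range T, a t + B) := by rw [← mul_sum, sum_add_distrib]
      _ ≤ κ * (S + B) := by gcongr
  rw [div_mul_eq_mul_div, le_div_iff₀ (sub_pos.2 hκ1)]
  linarith

theorem norm_sub_succ_le_mul_add {E : Type*} [SeminormedAddCommGroup E] {r η : ℤ → E}
    {κ : ℝ} (hκ0 : 0 ≤ κ) {t : ℤ} (hcontr : ‖r (t + 1) - η t‖ ≤ κ * ‖r t - η t‖) :
    ‖r (t + 1) - η t‖ ≤ κ * (‖r t - η (t - 1)‖ + ‖η t - η (t - 1)‖) := by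
  refine hcontr.trans (mul_le_mul_of_nonneg_left ?_ hκ0)
  rw [norm_sub_rev (η t)]
  exact norm_sub_le_norm_sub_add_norm_sub _ _ _

/-- If `r_{-1} = η_{-1} = r_0` and `‖r_t - η_{t-1}‖ ≤ κ ‖r_{t-1} - η_{t-1}‖` for all
`t ≥ 0` with `κ ∈ [0,1)`, then
`Σ_{t=0}^T ‖r_t - η_{t-1}‖ ≤ (κ/(1-κ)) Σ_{t=0}^{T-1} ‖η_t - η_{t-1}‖`. -/
theorem stmt7 {m : ℕ} (η r : ℤ → EuclideanSpace ℝ (Fin m))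
    (κ : ℝ) (hκ : κ ∈ Set.Ico (0 : ℝ) 1)
    (hinit : r (-1) = η (-1) ∧ η (-1) = r 0)
    (hcontr : ∀ t : ℕ, ‖r t - η (t - 1)‖ ≤ κ * ‖r (t - 1) - η (t - 1)‖)
    (T : ℕ) :
    ∑ t ∈ Finset.range (T + 1), ‖r t - η ((t : ℤ) - 1)‖
      ≤ κ / (1 - κ) * ∑ t ∈ Finset.range T, ‖η t - η ((t : ℤ) - 1)‖ := by
  obtain ⟨hκ0, hκ1⟩ := hκ
  refine sum_range_succ_le_div_one_sub_mul_sum hκ0 hκ1 ?_ (fun t => norm_nonneg _) (fun s => ?_) T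
  · simp [← hinit.2]
  · have h := hcontr (s + 1)
    push_cast at h ⊢
    rw [add_sub_cancel_right] at h ⊢
    exact norm_sub_succ_le_mul_add hκ0 h
end

section
/- Let (v_t), (r_t), (η_t) be sequences in ℝ^m with v_{-1} = η_{-1}, v_t = (1 - α_t) v_{t-1} + α_t r_t where α_t ∈ [ε, 1] with ε > 0, and suppose Σ_{t=0}^T ‖r_t - η_{t-1}‖ ≤ (κ/(1-κ)) Σ_{t=0}^T ‖η_t - η_{t-1}‖ for κ ∈ [0,1). Then Σ_{t=0}^T ‖v_t - η_t‖ ≤ (1/(ε(1-κ))) Σ_{t=0}^T ‖η_t - η_{t-1}‖. -/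
/-!
Writing `e_t = v_t - η_t`, the update gives
`e_t = (1 - α_t) e_{t-1} + α_t (r_t - η_{t-1}) + (η_{t-1} - η_t)`, so
`‖e_t‖ ≤ (1 - ε) ‖e_{t-1}‖ + ‖r_t - η_{t-1}‖ + ‖η_t - η_{t-1}‖`.
Summing over `t ≤ T` with `e_{-1} = 0` gives `ε Σ ‖e_t‖ ≤ Σ ‖r_t - η_{t-1}‖ + Σ ‖η_t - η_{t-1}‖`,
and the tracking bound on `r` turns the right-hand side into `(1 - κ)⁻¹ Σ ‖η_t - η_{t-1}‖`.
-/

open Finset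

lemma norm_convexCombo_sub_le {E : Type*} [NormedAddCommGroup E] [NormedSpace ℝ E]
    {a ε : ℝ} (hε : 0 ≤ ε) (ha : a ∈ Set.Icc ε 1) (v r η' η : E) :
    ‖(1 - a) • v + a • r - η‖ ≤ (1 - ε) * ‖v - η'‖ + (‖r - η'‖ + ‖η - η'‖) := by
  obtain ⟨hεa, ha1⟩ := ha
  have hsplit : (1 - a) • v + a • r - η = (1 - a) • (v - η') + a • (r - η') + (η' - η) := by
    module
  calc ‖(1 - a) • v + a • r - η‖
      ≤ ‖(1 - a) • (v - η')‖ + ‖a • (r - η')‖ + ‖η' - η‖ := hsplit ▸ norm_add₃_le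
    _ = (1 - a) * ‖v - η'‖ + a * ‖r - η'‖ + ‖η - η'‖ := by
      rw [norm_smul, norm_smul, Real.norm_of_nonneg (by linarith),
        Real.norm_of_nonneg (by linarith), norm_sub_rev η']
    _ ≤ (1 - ε) * ‖v - η'‖ + (‖r - η'‖ + ‖η - η'‖) := by
      have := mul_le_mul_of_nonneg_right (sub_le_sub_left hεa 1) (norm_nonneg (v - η'))
      have := mul_le_of_le_one_left (norm_nonneg (r - η')) ha1
      linarith

lemma sum_le_of_le_mul_prev {x : ℤ → ℝ} {b : ℕ → ℝ} {c : ℝ} (hc : 0 ≤ c)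
    (hx : ∀ t : ℕ, 0 ≤ x t) (hx₀ : x (-1) = 0) (hstep : ∀ t : ℕ, x t ≤ c * x (t - 1) + b t)
    (T : ℕ) : (1 - c) * ∑ t ∈ range (T + 1), x t ≤ ∑ t ∈ range (T + 1), b t := by
  have hprev : ∑ t ∈ range (T + 1), x ((t : ℤ) - 1) = ∑ t ∈ range T, x t := by
    rw [sum_range_succ']
    push_cast
    simp [hx₀]
  have hprev_le : ∑ t ∈ range (T + 1), x ((t : ℤ) - 1) ≤ ∑ t ∈ range (T + 1), x t :=
    hprev ▸ sum_le_sum_of_subset_of_nonneg (range_subset_range.2 T.le_succ)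
      fun t _ _ => hx t
  have hsum : ∑ t ∈ range (T + 1), x t
      ≤ c * ∑ t ∈ range (T + 1), x ((t : ℤ) - 1) + ∑ t ∈ range (T + 1), b t := by
    rw [mul_sum, ← sum_add_distrib]
    exact sum_le_sum fun t _ => hstep t
  nlinarith [mul_le_mul_of_nonneg_left hprev_le hc]

/-- If `v_{-1} = η_{-1}`, `v_t = (1-α_t) v_{t-1} + α_t r_t` with `α_t ∈ [ε,1]`, `ε > 0`,
and `Σ_{t=0}^T ‖r_t - η_{t-1}‖ ≤ (κ/(1-κ)) Σ_{t=0}^T ‖η_t - η_{t-1}‖` with `κ ∈ [0,1)`,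
then `Σ_{t=0}^T ‖v_t - η_t‖ ≤ (1/(ε(1-κ))) Σ_{t=0}^T ‖η_t - η_{t-1}‖`. -/
theorem stmt8 {m : ℕ} (v r η : ℤ → EuclideanSpace ℝ (Fin m)) (α : ℤ → ℝ)
    (ε κ : ℝ) (hε : 0 < ε) (hκ : κ ∈ Set.Ico (0 : ℝ) 1)
    (hinit : v (-1) = η (-1))
    (hα : ∀ t : ℕ, α t ∈ Set.Icc ε 1)
    (hupd : ∀ t : ℕ, v t = (1 - α t) • v (t - 1) + α t • r t)
    (T : ℕ)
    (hr : ∑ t ∈ Finset.range (T + 1), ‖r t - η ((t : ℤ) - 1)‖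
      ≤ κ / (1 - κ) * ∑ t ∈ Finset.range (T + 1), ‖η t - η ((t : ℤ) - 1)‖) :
    ∑ t ∈ Finset.range (T + 1), ‖v t - η t‖
      ≤ 1 / (ε * (1 - κ)) * ∑ t ∈ Finset.range (T + 1), ‖η t - η ((t : ℤ) - 1)‖ := by
  have hκ1 : 0 < 1 - κ := sub_pos.2 hκ.2
  have hε1 : 0 ≤ 1 - ε := sub_nonneg.2 ((hα 0).1.trans (hα 0).2)
  have hsum := sum_le_of_le_mul_prev (x := fun t => ‖v t - η t‖) hε1
    (fun _ => norm_nonneg _) (by simp [hinit])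
    (fun t => hupd t ▸ norm_convexCombo_sub_le hε.le (hα t) _ _ _ _) T
  rw [sum_add_distrib, sub_sub_cancel] at hsum
  set D := ∑ t ∈ range (T + 1), ‖η t - η ((t : ℤ) - 1)‖
  have hD : κ / (1 - κ) * D + D = D / (1 - κ) := by
    field_simp
    ring
  rw [one_div, ← div_eq_inv_mul, le_div_iff₀ (by positivity), ← mul_assoc,
    ← le_div_iff₀ hκ1, ← hD, mul_comm]
  linarith
end

section
/- Let O ⊆ ℝ^m × ℝⁿ be convex, S_v ⊆ ℝ^m, A_K, S_K matrices, and λ ∈ (0,1). Suppose (v, e) ∈ O implies (v, (1/λ) A_K e) ∈ O (invariance of the scaled MAS), and suppose (v + r, -S_K r) ∈ O for all v in some subset S̄_v ⊆ S_v and all r with ‖r‖ ≤ δ. If (v_{t-1}, x_{t-1} - S_K v_{t-1}) ∈ O with v_{t-1} ∈ S̄_v, x_t = A_K x_{t-1} + B v_{t-1}, S_K = (I - A_K)⁻¹ B, r_t ∈ S̄_v, and ‖r_t - v_{t-1}‖ ≥ (1-λ)δ, then with α = (1-λ)δ/‖r_t - v_{t-1}‖ ∈ (0,1], the point v = v_{t-1}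 + α(r_t - v_{t-1}) satisfies (v, x_t - S_K v) ∈ O. -/
/-!
The point `(v, x_t - S_K v)` is the convex combination, with weights `λ` and `1 - λ`, of
`(v_{t-1}, λ⁻¹ A_K (x_{t-1} - S_K v_{t-1}))`, which lies in `O` by invariance, and of the margin
point `(v_{t-1} + r, -S_K r)` with `r = δ (r_t - v_{t-1}) / ‖r_t - v_{t-1}‖`. The only algebra
needed is `A_K S_K v = S_K v - B v`, so that `x_t - S_K v_{t-1} = A_K (x_{t-1} - S_K v_{t-1})`.
-/

section ConvexCombination

variable {E F : Type*} [AddCommGroup E] [Module ℝ E] [AddCommGroup F] [Module ℝ F]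

theorem mk_add_smul_eq_convexCombination (A : F →ₗ[ℝ] F) (B S : E →ₗ[ℝ] F)
    (hS : ∀ w, S w - A (S w) = B w) {lam : ℝ} (hlam : lam ≠ 0) (v r : E) (x : F) :
    (v + (1 - lam) • r, A x + B v - S (v + (1 - lam) • r)) =
      lam • (v, lam⁻¹ • A (x - S v)) + (1 - lam) • (v + r, -S r) := by
  rw [Prod.smul_mk, Prod.smul_mk, Prod.mk_add_mk, smul_smul, mul_inv_cancel₀ hlam, one_smul,
    map_add, map_smul, map_sub, ← hS v]
  congr 1 <;> module

theorem mk_add_smul_mem_of_convex {O : Set (E × F)} (hO : Convex ℝ O) (A : F →ₗ[ℝ] F)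
    (B S : E →ₗ[ℝ] F) (hS : ∀ w, S w - A (S w) = B w) {lam : ℝ} (hlam : lam ∈ Set.Ioo 0 1)
    {v r : E} {x : F} (hinv : (v, lam⁻¹ • A (x - S v)) ∈ O) (hmargin : (v + r, -S r) ∈ O) :
    (v + (1 - lam) • r, A x + B v - S (v + (1 - lam) • r)) ∈ O := by
  rw [mk_add_smul_eq_convexCombination A B S hS hlam.1.ne' v r x]
  exact hO hinv hmargin hlam.1.le (sub_nonneg.2 hlam.2.le) (add_sub_cancel lam 1)

end ConvexCombination

theorem norm_div_norm_smul_le {E : Type*} [NormedAddCommGroup E] [NormedSpace ℝ E] {δ : ℝ}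
    (hδ : 0 ≤ δ) (u : E) : ‖(δ / ‖u‖) • u‖ ≤ δ := by
  rcases eq_or_ne ‖u‖ 0 with hu | hu
  · simp [hu, hδ]
  · rw [norm_smul, Real.norm_of_nonneg (by positivity), div_mul_cancel₀ δ hu]

theorem stmt10_general {n m : ℕ}
    (AK : EuclideanSpace ℝ (Fin n) →L[ℝ] EuclideanSpace ℝ (Fin n))
    (B SK : EuclideanSpace ℝ (Fin m) →L[ℝ] EuclideanSpace ℝ (Fin n))
    (hSK : ∀ w : EuclideanSpace ℝ (Fin m), SK w - AK (SK w) = B w)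
    (O : Set ((EuclideanSpace ℝ (Fin m)) × (EuclideanSpace ℝ (Fin n))))
    (hO : Convex ℝ O)
    (lam δ : ℝ) (hlam : lam ∈ Set.Ioo (0 : ℝ) 1) (hδ : 0 < δ)
    (Sbar : Set (EuclideanSpace ℝ (Fin m)))
    (hinv : ∀ v e, (v, e) ∈ O → (v, (1 / lam) • AK e) ∈ O)
    (hmargin : ∀ v ∈ Sbar, ∀ rδ : EuclideanSpace ℝ (Fin m),
      ‖rδ‖ ≤ δ → (v + rδ, -(SK rδ)) ∈ O)
    (vprev : EuclideanSpace ℝ (Fin m)) (hvprev : vprev ∈ Sbar)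
    (xprev xt : EuclideanSpace ℝ (Fin n))
    (hmem : (vprev, xprev - SK vprev) ∈ O)
    (hxt : xt = AK xprev + B vprev)
    (rt : EuclideanSpace ℝ (Fin m))
    (hbig : (1 - lam) * δ ≤ ‖rt - vprev‖) :
    (1 - lam) * δ / ‖rt - vprev‖ ∈ Set.Ioc (0 : ℝ) 1 ∧
      ((vprev + ((1 - lam) * δ / ‖rt - vprev‖) • (rt - vprev)),
        xt - SK (vprev + ((1 - lam) * δ / ‖rt - vprev‖) • (rt - vprev))) ∈ O := by
  have hstep : 0 < (1 - lam) * δ := mul_pos (sub_pos.2 hlam.2) hδ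
  have hdist : 0 < ‖rt - vprev‖ := hstep.trans_le hbig
  have hα : ((1 - lam) * δ / ‖rt - vprev‖) • (rt - vprev) =
      (1 - lam) • (δ / ‖rt - vprev‖) • (rt - vprev) := by
    rw [smul_smul, mul_div_assoc]
  refine ⟨⟨div_pos hstep hdist, (div_le_one hdist).2 hbig⟩, ?_⟩
  rw [hα, hxt]
  refine mk_add_smul_mem_of_convex hO AK.toLinearMap B.toLinearMap SK.toLinearMap hSK hlam ?_
    (hmargin vprev hvprev _ (norm_div_norm_smul_le hδ.le _))
  simpa only [one_div, ContinuousLinearMap.coe_coe] using hinv _ _ hmem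

/-- Reference governor feasibility (large-step case): under the scaled-MAS
invariance and interior-margin properties of the convex set `O`, if
`(v_{t-1}, x_{t-1} - S_K v_{t-1}) ∈ O`, `x_t = A_K x_{t-1} + B v_{t-1}`,
`(I - A_K) S_K = B`, `r_t ∈ S̄_v` and `‖r_t - v_{t-1}‖ ≥ (1-λ)δ`, then with
`α = (1-λ)δ/‖r_t - v_{t-1}‖ ∈ (0,1]` the reference
`v = v_{t-1} + α (r_t - v_{t-1})` satisfies `(v, x_t - S_K v) ∈ O`. -/
theorem stmt10 {n m : ℕ}
    (AK : EuclideanSpace ℝ (Fin n) →L[ℝ] EuclideanSpace ℝ (Fin n))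
    (B SK : EuclideanSpace ℝ (Fin m) →L[ℝ] EuclideanSpace ℝ (Fin n))
    (hSK : ∀ w : EuclideanSpace ℝ (Fin m), SK w - AK (SK w) = B w)
    (O : Set ((EuclideanSpace ℝ (Fin m)) × (EuclideanSpace ℝ (Fin n))))
    (hO : Convex ℝ O)
    (lam δ : ℝ) (hlam : lam ∈ Set.Ioo (0 : ℝ) 1) (hδ : 0 < δ)
    (Sv Sbar : Set (EuclideanSpace ℝ (Fin m))) (hSbar : Sbar ⊆ Sv)
    (hinv : ∀ v e, (v, e) ∈ O → (v, (1 / lam) • AK e) ∈ O)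
    (hmargin : ∀ v ∈ Sbar, ∀ rδ : EuclideanSpace ℝ (Fin m),
      ‖rδ‖ ≤ δ → (v + rδ, -(SK rδ)) ∈ O)
    (vprev : EuclideanSpace ℝ (Fin m)) (hvprev : vprev ∈ Sbar)
    (xprev xt : EuclideanSpace ℝ (Fin n))
    (hmem : (vprev, xprev - SK vprev) ∈ O)
    (hxt : xt = AK xprev + B vprev)
    (rt : EuclideanSpace ℝ (Fin m)) (hrt : rt ∈ Sbar)
    (hbig : (1 - lam) * δ ≤ ‖rt - vprev‖) :
    (1 - lam) * δ / ‖rt - vprev‖ ∈ Set.Ioc (0 : ℝ) 1 ∧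
      ((vprev + ((1 - lam) * δ / ‖rt - vprev‖) • (rt - vprev)),
        xt - SK (vprev + ((1 - lam) * δ / ‖rt - vprev‖) • (rt - vprev))) ∈ O :=
  stmt10_general AK B SK hSK O hO lam δ hlam hδ Sbar hinv hmargin vprev hvprev xprev xt hmem hxt rt
    hbig
end

section
/- Under the same setup, if instead ‖r_t - v_{t-1}‖ < (1-λ)δ, then (r_t, x_t - S_K r_t) ∈ O, i.e., α = 1 is feasible for the reference governor update. -/
/-- Reference governor feasibility (small-step case): under the scaled-MAS
invariance and interior-margin properties of the convex set `O`, if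
`(v_{t-1}, x_{t-1} - S_K v_{t-1}) ∈ O`, `x_t = A_K x_{t-1} + B v_{t-1}`,
`(I - A_K) S_K = B`, `r_t ∈ S̄_v` and `‖r_t - v_{t-1}‖ < (1-λ)δ`, then
`(r_t, x_t - S_K r_t) ∈ O`, i.e. `α = 1` is feasible. -/
theorem stmt11 {n m : ℕ}
    (AK : EuclideanSpace ℝ (Fin n) →L[ℝ] EuclideanSpace ℝ (Fin n))
    (B SK : EuclideanSpace ℝ (Fin m) →L[ℝ] EuclideanSpace ℝ (Fin n))
    (hSK : ∀ w : EuclideanSpace ℝ (Fin m), SK w - AK (SK w) = B w)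
    (O : Set ((EuclideanSpace ℝ (Fin m)) × (EuclideanSpace ℝ (Fin n))))
    (hO : Convex ℝ O)
    (lam δ : ℝ) (hlam : lam ∈ Set.Ioo (0 : ℝ) 1) (hδ : 0 < δ)
    (Sv Sbar : Set (EuclideanSpace ℝ (Fin m))) (hSbar : Sbar ⊆ Sv)
    (hinv : ∀ v e, (v, e) ∈ O → (v, (1 / lam) • AK e) ∈ O)
    (hmargin : ∀ v ∈ Sbar, ∀ rδ : EuclideanSpace ℝ (Fin m),
      ‖rδ‖ ≤ δ → (v + rδ, -(SK rδ)) ∈ O)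
    (vprev : EuclideanSpace ℝ (Fin m)) (hvprev : vprev ∈ Sbar)
    (xprev xt : EuclideanSpace ℝ (Fin n))
    (hmem : (vprev, xprev - SK vprev) ∈ O)
    (hxt : xt = AK xprev + B vprev)
    (rt : EuclideanSpace ℝ (Fin m)) (hrt : rt ∈ Sbar)
    (hsmall : ‖rt - vprev‖ < (1 - lam) * δ) :
    (rt, xt - SK rt) ∈ O := by
  obtain ⟨hl0, hl1⟩ := hlam
  have h1l : (0:ℝ) < 1 - lam := by linarith
  set rδ : EuclideanSpace ℝ (Fin m) := (1 - lam)⁻¹ • (rt - vprev) with hrδ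
  have hnorm : ‖rδ‖ ≤ δ := by
    rw [hrδ, norm_smul, norm_inv, Real.norm_eq_abs, abs_of_pos h1l]
    rw [inv_mul_le_iff₀ h1l]
    nlinarith
  have hA : (vprev, (1 / lam) • AK (xprev - SK vprev)) ∈ O := hinv _ _ hmem
  have hB : (vprev + rδ, -(SK rδ)) ∈ O := hmargin _ hvprev _ hnorm
  have hconv := hO hA hB (le_of_lt hl0) (le_of_lt h1l) (by ring)
  have key : lam • (vprev, (1 / lam) • AK (xprev - SK vprev)) +
      (1 - lam) • (vprev + rδ, -(SK rδ)) = (rt, xt - SK rt) := by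
    have hlne : lam ≠ 0 := ne_of_gt hl0
    have h1lne : (1:ℝ) - lam ≠ 0 := ne_of_gt h1l
    have hASK := hSK vprev
    apply Prod.ext
    · simp only [Prod.fst_add, Prod.smul_fst, hrδ, smul_smul,
        mul_inv_cancel₀ h1lne, one_smul, smul_add]
      module
    · simp only [Prod.snd_add, Prod.smul_snd, hrδ, smul_smul,
        mul_one_div, div_self hlne, one_smul, map_smul, map_sub, map_add,
        mul_inv_cancel₀ h1lne, hxt]
      have : AK (SK vprev) = SK vprev - B vprev := by
        rw [eq_sub_iff_add_eq, ← eq_sub_iff_add_eq']; exact (hSK vprev).symm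
      rw [this]
      match_scalars <;> field_simp <;> ring
  rwa [key] at hconv
end

section
/- Combined regret bound: let (η_t), (r_t), (v_t) be sequences in ℝ^m with v_{-1} = r_{-1} = η_{-1} = r_0 = v_0, satisfying (i) ‖r_t - η_{t-1}‖ ≤ κ‖r_{t-1} - η_{t-1}‖ with κ ∈ [0,1), (ii) v_t = (1-α_t) v_{t-1} + α_t r_t with α_t ∈ [ε,1], ε > 0. Let x_t ∈ ℝⁿ satisfy x_{t+1} = A_K x_t + B v_t with ‖A_K^t‖ ≤ c σ^t, c ≥ 1, σ ∈ (0,1), and S_K = (I - A_K)⁻¹ B. Then for any k_x, k_v > 0, k_x Σ_{t=0}^T ‖x_t - S_K v_t‖ + k_v Σ_{t=0}^T ‖v_t - η_t‖ ≤ K_{0,θ} ‖x_0 - S_K η_0‖ + K_{0,η} ‖v_0 - η_0‖ + K_η Σ_{t=1}^T ‖η_t - η_{t-1}‖, where ε_κ = ε(1-κ), K_{0,θ} = k_x c/(1-σ), K_{0,η} = (2 k_x c ‖S_K‖ (1+ε_κ) + k_v (1-σ))/(ε_κ (1-σ)), and K_η = (k_x c ‖S_K‖ (2+ε_κ) + k_v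 (1-σ))/(ε_κ(1-σ)). -/
set_option maxHeartbeats 1000000

private lemma geo_aux {f g : ℕ → ℝ} {ρ : ℝ}
    (hrec : ∀ t : ℕ, f (t + 1) ≤ ρ * f t + g (t + 1)) :
    ∀ T : ℕ, (1 - ρ) * ∑ t ∈ Finset.range (T + 1), f t + ρ * f T
      ≤ f 0 + ∑ t ∈ Finset.Icc 1 T, g t := by
  intro T
  induction T with
  | zero => simp; linarith
  | succ T ih =>
    rw [Finset.sum_range_succ, Finset.sum_Icc_succ_top (by omega : 1 ≤ T + 1)]
    have := hrec T
    linarith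

private lemma geo_sum_le {f g : ℕ → ℝ} {ρ : ℝ} (hρ0 : 0 ≤ ρ)
    (hrec : ∀ t : ℕ, f (t + 1) ≤ ρ * f t + g (t + 1)) (T : ℕ) (hfT : 0 ≤ f T) :
    (1 - ρ) * ∑ t ∈ Finset.range (T + 1), f t ≤ f 0 + ∑ t ∈ Finset.Icc 1 T, g t := by
  have h := geo_aux hrec T
  nlinarith [mul_nonneg hρ0 hfT]

/-- Combined regret bound (core of Theorem 1): under the OCO contraction,
the reference-governor convex-combination update with step fractions in `[ε,1]`,
exponentially decaying powers `‖A_K^t‖ ≤ c σ^t`, dynamics `x_{t+1} = A_K x_t + B v_t`,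
and `(I - A_K) S_K = B`, the weighted tracking sums are bounded by the path length:
`k_x Σ‖x_t - S_K v_t‖ + k_v Σ‖v_t - η_t‖ ≤ K_{0,θ}‖x_0 - S_K η_0‖ + K_{0,η}‖v_0 - η_0‖
  + K_η Σ_{t=1}^T ‖η_t - η_{t-1}‖`. -/
theorem stmt14 {n m : ℕ}
    (AK : EuclideanSpace ℝ (Fin n) →L[ℝ] EuclideanSpace ℝ (Fin n))
    (B SK : EuclideanSpace ℝ (Fin m) →L[ℝ] EuclideanSpace ℝ (Fin n))
    (hSK : ∀ w, SK w - AK (SK w) = B w)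
    (c σ : ℝ) (hc : 1 ≤ c) (hσ : σ ∈ Set.Ioo (0 : ℝ) 1)
    (hpow : ∀ t : ℕ, ‖AK ^ t‖ ≤ c * σ ^ t)
    (η r v : ℤ → EuclideanSpace ℝ (Fin m)) (α : ℤ → ℝ)
    (κ ε : ℝ) (hκ : κ ∈ Set.Ico (0 : ℝ) 1) (hε : 0 < ε)
    (hinit : v (-1) = r (-1) ∧ r (-1) = η (-1) ∧ η (-1) = r 0 ∧ r 0 = v 0)
    (hcontr : ∀ t : ℕ, ‖r t - η ((t : ℤ) - 1)‖ ≤ κ * ‖r ((t : ℤ) - 1) - η ((t : ℤ) - 1)‖)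
    (hα : ∀ t : ℕ, α t ∈ Set.Icc ε 1)
    (hupd : ∀ t : ℕ, v t = (1 - α t) • v ((t : ℤ) - 1) + α t • r t)
    (x : ℕ → EuclideanSpace ℝ (Fin n))
    (hdyn : ∀ t : ℕ, x (t + 1) = AK (x t) + B (v t))
    (kx kv : ℝ) (hkx : 0 < kx) (hkv : 0 < kv)
    (T : ℕ) :
    kx * ∑ t ∈ Finset.range (T + 1), ‖x t - SK (v t)‖
      + kv * ∑ t ∈ Finset.range (T + 1), ‖v t - η t‖
    ≤ (kx * c / (1 - σ)) * ‖x 0 - SK (η 0)‖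
      + ((2 * kx * c * ‖SK‖ * (1 + ε * (1 - κ)) + kv * (1 - σ))
          / (ε * (1 - κ) * (1 - σ))) * ‖v 0 - η 0‖
      + ((kx * c * ‖SK‖ * (2 + ε * (1 - κ)) + kv * (1 - σ))
          / (ε * (1 - κ) * (1 - σ)))
        * ∑ t ∈ Finset.Icc 1 T, ‖η t - η ((t : ℤ) - 1)‖ := by
  obtain ⟨hσ0, hσ1⟩ := hσ
  obtain ⟨hκ0, hκ1⟩ := hκ
  obtain ⟨hv1, hr1, hη1, hr0⟩ := hinit
  have hε1 : ε ≤ 1 := le_trans (hα 0).1 (hα 0).2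
  have hεκ0 : 0 < ε * (1 - κ) := by nlinarith
  have hεκ1 : ε * (1 - κ) ≤ 1 := by nlinarith
  have h1σ : 0 < 1 - σ := by linarith
  have hs0 : (0:ℝ) ≤ ‖SK‖ := norm_nonneg _
  have hcast : ∀ t : ℕ, ((t + 1 : ℕ) : ℤ) - 1 = (t : ℤ) := fun t => by push_cast; ring
  -- scalar sequences
  set u : ℕ → ℝ := fun t => ‖v (t:ℤ) - η (t:ℤ)‖ with hu_def
  set bq : ℕ → ℝ := fun t => ‖r (t:ℤ) - η (t:ℤ)‖ with hb_def
  set w : ℕ → ℝ := fun t => max (u t) (bq t) with hw_def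
  set δ : ℕ → ℝ := fun t => ‖η (t:ℤ) - η ((t:ℤ) - 1)‖ with hδ_def
  have hu_nn : ∀ t, 0 ≤ u t := fun t => norm_nonneg _
  have hb_nn : ∀ t, 0 ≤ bq t := fun t => norm_nonneg _
  have hw_nn : ∀ t, 0 ≤ w t := fun t => le_trans (hu_nn t) (le_max_left _ _)
  have hδ_nn : ∀ t, 0 ≤ δ t := fun t => norm_nonneg _
  have hb0 : bq 0 = u 0 := by simp only [hb_def, hu_def, Nat.cast_zero, hr0]
  have hw0 : w 0 = u 0 := by simp only [hw_def, hb0, max_self]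
  -- rewritten hypotheses at successor times
  have hc1 : ∀ t : ℕ, ((t + 1 : ℕ) : ℤ) = (t:ℤ) + 1 := fun t => by push_cast; ring
  have hc2 : ∀ t : ℕ, ((t:ℤ) + 1) - 1 = (t:ℤ) := fun t => by ring
  have hcontr2 : ∀ t : ℕ, ‖r ((t:ℤ) + 1) - η (t:ℤ)‖ ≤ κ * ‖r (t:ℤ) - η (t:ℤ)‖ := by
    intro t
    have h := hcontr (t + 1)
    rw [hc1 t, hc2 t] at h
    exact h
  have hupd2 : ∀ t : ℕ, v ((t:ℤ) + 1)
      = (1 - α ((t:ℤ) + 1)) • v (t:ℤ) + α ((t:ℤ) + 1) • r ((t:ℤ) + 1) := by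
    intro t
    have h := hupd (t + 1)
    rw [hc1 t, hc2 t] at h
    exact h
  have hα2 : ∀ t : ℕ, α ((t:ℤ) + 1) ∈ Set.Icc ε 1 := by
    intro t
    have h := hα (t + 1)
    rw [hc1 t] at h
    exact h
  have hcastδ : ∀ t : ℕ, δ (t + 1) = ‖η ((t:ℤ) + 1) - η (t:ℤ)‖ := by
    intro t
    simp only [hδ_def]
    rw [hc1 t, hc2 t]
  -- recursion for bq
  have hbrec : ∀ t : ℕ, bq (t + 1) ≤ κ * bq t + δ (t + 1) := by
    intro t
    have h1 : ‖r ((t:ℤ)+1) - η ((t:ℤ)+1)‖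
        ≤ ‖r ((t:ℤ)+1) - η (t:ℤ)‖ + ‖η (t:ℤ) - η ((t:ℤ)+1)‖ :=
      norm_sub_le_norm_sub_add_norm_sub _ _ _
    have h2 := hcontr2 t
    have h3 : ‖η (t:ℤ) - η ((t:ℤ)+1)‖ = δ (t + 1) := by
      rw [hcastδ t, norm_sub_rev]
    have h4 : bq (t + 1) = ‖r ((t:ℤ)+1) - η ((t:ℤ)+1)‖ := by
      simp only [hb_def, hc1 t]
    rw [h4]
    simp only [hb_def]
    linarith
  -- recursion for u
  have hurec : ∀ t : ℕ, u (t + 1) ≤ (1 - α ((t:ℤ)+1)) * u t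
      + (1 - α ((t:ℤ)+1)) * δ (t + 1) + α ((t:ℤ)+1) * bq (t + 1) := by
    intro t
    obtain ⟨ha1, ha2⟩ := hα2 t
    have hid : v ((t:ℤ)+1) - η ((t:ℤ)+1)
        = (1 - α ((t:ℤ)+1)) • (v (t:ℤ) - η (t:ℤ))
          + ((1 - α ((t:ℤ)+1)) • (η (t:ℤ) - η ((t:ℤ)+1))
          + α ((t:ℤ)+1) • (r ((t:ℤ)+1) - η ((t:ℤ)+1))) := by
      rw [hupd2 t]; module
    have h4 : u (t + 1) = ‖v ((t:ℤ)+1) - η ((t:ℤ)+1)‖ := by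
      simp only [hu_def, hc1 t]
    have hb4 : bq (t + 1) = ‖r ((t:ℤ)+1) - η ((t:ℤ)+1)‖ := by
      simp only [hb_def, hc1 t]
    rw [h4, hid]
    refine le_trans (norm_add_le _ _) ?_
    refine le_trans (add_le_add_right (norm_add_le _ _) _) ?_
    rw [norm_smul, norm_smul, norm_smul, Real.norm_eq_abs, Real.norm_eq_abs,
      abs_of_nonneg (by linarith : (0:ℝ) ≤ 1 - α ((t:ℤ)+1)),
      abs_of_nonneg (by linarith : (0:ℝ) ≤ α ((t:ℤ)+1))]
    have h3 : ‖η (t:ℤ) - η ((t:ℤ)+1)‖ = δ (t + 1) := by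
      rw [hcastδ t, norm_sub_rev]
    rw [h3, hb4]
    simp only [hu_def]
    linarith
  -- recursion for w
  have hwrec : ∀ t : ℕ, w (t + 1) ≤ (1 - ε * (1 - κ)) * w t + δ (t + 1) := by
    intro t
    obtain ⟨ha1, ha2⟩ := hα2 t
    have hbw : bq t ≤ w t := le_max_right _ _
    have huw : u t ≤ w t := le_max_left _ _
    have hb1 := hbrec t
    have hbb : bq (t + 1) ≤ (1 - ε * (1 - κ)) * w t + δ (t + 1) := by
      have : κ ≤ 1 - ε * (1 - κ) := by nlinarith
      nlinarith [hw_nn t]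
    have huu : u (t + 1) ≤ (1 - ε * (1 - κ)) * w t + δ (t + 1) := by
      have h := hurec t
      have e1 : (1 - α ((t:ℤ)+1)) * u t ≤ (1 - α ((t:ℤ)+1)) * w t :=
        mul_le_mul_of_nonneg_left huw (by linarith)
      have e2 : α ((t:ℤ)+1) * bq (t + 1) ≤ α ((t:ℤ)+1) * (κ * bq t + δ (t + 1)) :=
        mul_le_mul_of_nonneg_left hb1 (by linarith)
      have e3 : α ((t:ℤ)+1) * (κ * bq t) ≤ α ((t:ℤ)+1) * (κ * w t) :=
        mul_le_mul_of_nonneg_left (mul_le_mul_of_nonneg_left hbw hκ0) (by linarith)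
      have e4 : ε * ((1 - κ) * w t) ≤ α ((t:ℤ)+1) * ((1 - κ) * w t) :=
        mul_le_mul_of_nonneg_right ha1 (mul_nonneg (by linarith) (hw_nn t))
      have e5 : (1 - α ((t:ℤ)+1)) * δ (t + 1) + α ((t:ℤ)+1) * δ (t + 1) = δ (t + 1) := by ring
      nlinarith [h, e1, e2, e3, e4, e5]
    exact max_le huu hbb
  -- sum bound for w
  have hWsum : (ε * (1 - κ)) * ∑ t ∈ Finset.range (T + 1), w t
      ≤ u 0 + ∑ t ∈ Finset.Icc 1 T, δ t := by
    have h := geo_sum_le (ρ := 1 - ε * (1 - κ)) (f := w) (g := δ)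
      (by linarith) hwrec T (hw_nn T)
    rw [hw0] at h
    linarith
  -- dynamics part
  have hc0 : (0:ℝ) < c := by linarith
  set Δ : ℕ → ℝ := fun t => ‖v (t:ℤ) - v ((t:ℤ) - 1)‖ with hΔ_def
  have hΔ_nn : ∀ t, 0 ≤ Δ t := fun t => norm_nonneg _
  have hΔs : ∀ t : ℕ, Δ (t + 1) = ‖v (t:ℤ) - v ((t:ℤ)+1)‖ := by
    intro t
    simp only [hΔ_def, hc1 t, hc2 t]
    rw [norm_sub_rev]
  have hz : ∀ t : ℕ, x (t + 1) - SK (v ((t:ℤ)+1))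
      = AK (x t - SK (v (t:ℤ))) + SK (v (t:ℤ) - v ((t:ℤ)+1)) := by
    intro t
    rw [hdyn t, ← hSK (v (t:ℤ))]
    simp only [map_sub]
    abel
  have hunroll : ∀ t : ℕ, x t - SK (v (t:ℤ)) = (AK ^ t) (x 0 - SK (v (0:ℤ)))
      + ∑ s ∈ Finset.range t, (AK ^ (t - 1 - s)) (SK (v (s:ℤ) - v ((s:ℤ)+1))) := by
    intro t
    induction t with
    | zero => simp
    | succ t ih =>
      have h1 : x (t + 1) - SK (v ((t + 1 : ℕ):ℤ))
          = AK (x t - SK (v (t:ℤ))) + SK (v (t:ℤ) - v ((t:ℤ)+1)) := by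
        rw [hc1 t]; exact hz t
      rw [h1, ih, map_add, map_sum, Finset.sum_range_succ]
      have h2 : ∀ s ∈ Finset.range t,
          AK ((AK ^ (t - 1 - s)) (SK (v (s:ℤ) - v ((s:ℤ)+1))))
            = (AK ^ (t + 1 - 1 - s)) (SK (v (s:ℤ) - v ((s:ℤ)+1))) := by
        intro s hs
        rw [Finset.mem_range] at hs
        rw [← ContinuousLinearMap.mul_apply, ← pow_succ',
          show t - 1 - s + 1 = t + 1 - 1 - s by omega]
      rw [Finset.sum_congr rfl h2]
      have h3 : (AK ^ (t + 1)) (x 0 - SK (v (0:ℤ)))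
          = AK ((AK ^ t) (x 0 - SK (v (0:ℤ)))) := by
        rw [pow_succ', ContinuousLinearMap.mul_apply]
      rw [h3, show t + 1 - 1 - t = 0 by omega, pow_zero, ContinuousLinearMap.one_apply]
      abel
  have hZptw : ∀ t : ℕ, ‖x t - SK (v (t:ℤ))‖
      ≤ c * σ ^ t * ‖x 0 - SK (v (0:ℤ))‖
        + c * ‖SK‖ * ∑ s ∈ Finset.range t, σ ^ (t - 1 - s) * Δ (s + 1) := by
    intro t
    rw [hunroll t]
    refine le_trans (norm_add_le _ _) (add_le_add ?_ ?_)
    · refine le_trans (ContinuousLinearMap.le_opNorm _ _) ?_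
      exact mul_le_mul_of_nonneg_right (hpow t) (norm_nonneg _)
    · refine le_trans (norm_sum_le _ _) ?_
      rw [Finset.mul_sum]
      refine Finset.sum_le_sum fun s hs => ?_
      have a1 : ‖(AK ^ (t - 1 - s)) (SK (v (s:ℤ) - v ((s:ℤ)+1)))‖
          ≤ ‖AK ^ (t - 1 - s)‖ * ‖SK (v (s:ℤ) - v ((s:ℤ)+1))‖ :=
        ContinuousLinearMap.le_opNorm _ _
      have a2 : ‖SK (v (s:ℤ) - v ((s:ℤ)+1))‖ ≤ ‖SK‖ * Δ (s + 1) := by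
        rw [hΔs s]
        exact SK.le_opNorm _
      calc ‖(AK ^ (t - 1 - s)) (SK (v (s:ℤ) - v ((s:ℤ)+1)))‖
          ≤ ‖AK ^ (t - 1 - s)‖ * ‖SK (v (s:ℤ) - v ((s:ℤ)+1))‖ := a1
        _ ≤ (c * σ ^ (t - 1 - s)) * (‖SK‖ * Δ (s + 1)) := by
            refine mul_le_mul (hpow _) a2 (norm_nonneg _) ?_
            exact mul_nonneg hc0.le (pow_nonneg hσ0.le _)
        _ = c * ‖SK‖ * (σ ^ (t - 1 - s) * Δ (s + 1)) := by ring
  set F : ℕ → ℝ := fun t => ∑ s ∈ Finset.range t, σ ^ (t - 1 - s) * Δ (s + 1) with hF_def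
  have hF_nn : ∀ t, 0 ≤ F t := by
    intro t
    simp only [hF_def]
    exact Finset.sum_nonneg fun s _ => mul_nonneg (pow_nonneg hσ0.le _) (hΔ_nn _)
  have hFrec : ∀ t : ℕ, F (t + 1) = σ * F t + Δ (t + 1) := by
    intro t
    simp only [hF_def, Finset.sum_range_succ, Nat.add_sub_cancel, Nat.sub_self,
      pow_zero, one_mul]
    rw [Finset.mul_sum]
    congr 1
    refine Finset.sum_congr rfl fun s hs => ?_
    rw [Finset.mem_range] at hs
    rw [← mul_assoc, ← pow_succ', show t - 1 - s + 1 = t - s by omega]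
  have hYrec : ∀ t : ℕ,
      c * σ ^ (t + 1) * ‖x 0 - SK (v (0:ℤ))‖ + c * ‖SK‖ * F (t + 1)
        ≤ σ * (c * σ ^ t * ‖x 0 - SK (v (0:ℤ))‖ + c * ‖SK‖ * F t)
          + (c * ‖SK‖ * Δ (t + 1)) := by
    intro t
    rw [hFrec t]
    ring_nf
    exact le_refl _
  have hYsum := geo_sum_le (ρ := σ)
    (f := fun t => c * σ ^ t * ‖x 0 - SK (v (0:ℤ))‖ + c * ‖SK‖ * F t)
    (g := fun t => c * ‖SK‖ * Δ t) hσ0.le hYrec T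
    (add_nonneg
      (mul_nonneg (mul_nonneg hc0.le (pow_nonneg hσ0.le T)) (norm_nonneg _))
      (mul_nonneg (mul_nonneg hc0.le hs0) (hF_nn T)))
  have hF0 : F 0 = 0 := by simp [hF_def]
  have hXsum : (1 - σ) * ∑ t ∈ Finset.range (T + 1), ‖x t - SK (v (t:ℤ))‖
      ≤ c * ‖x 0 - SK (v (0:ℤ))‖ + c * ‖SK‖ * ∑ t ∈ Finset.Icc 1 T, Δ t := by
    have s1 : ∑ t ∈ Finset.range (T + 1), ‖x t - SK (v (t:ℤ))‖
        ≤ ∑ t ∈ Finset.range (T + 1),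
            (c * σ ^ t * ‖x 0 - SK (v (0:ℤ))‖ + c * ‖SK‖ * F t) :=
      Finset.sum_le_sum fun t _ => hZptw t
    have s2 := mul_le_mul_of_nonneg_left s1 h1σ.le
    have s3 : ∑ t ∈ Finset.Icc 1 T, c * ‖SK‖ * Δ t
        = c * ‖SK‖ * ∑ t ∈ Finset.Icc 1 T, Δ t := by rw [Finset.mul_sum]
    simp only [hF0, pow_zero] at hYsum
    rw [s3] at hYsum
    have : c * σ ^ 0 * ‖x 0 - SK (v (0:ℤ))‖ + c * ‖SK‖ * F 0
        = c * ‖x 0 - SK (v (0:ℤ))‖ := by simp [hF0]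
    nlinarith [hYsum, s2]
  -- Δ bound by w
  have hΔw : ∀ t : ℕ, Δ (t + 1) ≤ 2 * w t := by
    intro t
    obtain ⟨ha1, ha2⟩ := hα2 t
    have hvv : v ((t:ℤ)+1) - v (t:ℤ) = α ((t:ℤ)+1) • (r ((t:ℤ)+1) - v (t:ℤ)) := by
      rw [hupd2 t]; module
    have e0 : Δ (t + 1) = α ((t:ℤ)+1) * ‖r ((t:ℤ)+1) - v (t:ℤ)‖ := by
      rw [hΔs t, norm_sub_rev, hvv, norm_smul, Real.norm_eq_abs,
        abs_of_nonneg (by linarith : (0:ℝ) ≤ α ((t:ℤ)+1))]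
    have b1 : ‖r ((t:ℤ)+1) - v (t:ℤ)‖
        ≤ ‖r ((t:ℤ)+1) - η (t:ℤ)‖ + ‖η (t:ℤ) - v (t:ℤ)‖ :=
      norm_sub_le_norm_sub_add_norm_sub _ _ _
    have b2 := hcontr2 t
    have b3 : ‖η (t:ℤ) - v (t:ℤ)‖ = u t := by
      simp only [hu_def]
      exact norm_sub_rev _ _
    have b4 : α ((t:ℤ)+1) * ‖r ((t:ℤ)+1) - v (t:ℤ)‖ ≤ ‖r ((t:ℤ)+1) - v (t:ℤ)‖ := by
      nlinarith [norm_nonneg (r ((t:ℤ)+1) - v (t:ℤ))]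
    have b5 : κ * ‖r (t:ℤ) - η (t:ℤ)‖ ≤ bq t := by
      have : κ * bq t ≤ 1 * bq t :=
        mul_le_mul_of_nonneg_right (by linarith) (hb_nn t)
      simp only [hb_def] at this ⊢
      linarith
    have hbw : bq t ≤ w t := le_max_right _ _
    have huw : u t ≤ w t := le_max_left _ _
    rw [e0]
    simp only [hb_def] at hbw
    linarith
  have hΔIcc : ∑ t ∈ Finset.Icc 1 T, Δ t ≤ 2 * ∑ t ∈ Finset.range (T + 1), w t := by
    rw [← Finset.Ico_add_one_right_eq_Icc, Finset.sum_Ico_eq_sum_range]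
    try simp only [Nat.add_sub_cancel]
    calc ∑ i ∈ Finset.range T, Δ (1 + i)
        ≤ ∑ i ∈ Finset.range T, 2 * w i := by
          refine Finset.sum_le_sum fun i _ => ?_
          rw [add_comm]
          exact hΔw i
      _ = 2 * ∑ i ∈ Finset.range T, w i := by rw [Finset.mul_sum]
      _ ≤ 2 * ∑ i ∈ Finset.range (T + 1), w i := by
          rw [Finset.sum_range_succ]
          nlinarith [hw_nn T, Finset.sum_nonneg fun (i:ℕ) (_ : i ∈ Finset.range T) => hw_nn i]
  have hZ0 : ‖x 0 - SK (v (0:ℤ))‖ ≤ ‖x 0 - SK (η 0)‖ + ‖SK‖ * u 0 := by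
    have b1 : ‖x 0 - SK (v (0:ℤ))‖
        ≤ ‖x 0 - SK (η 0)‖ + ‖SK (η 0) - SK (v (0:ℤ))‖ :=
      norm_sub_le_norm_sub_add_norm_sub _ _ _
    have b2 : ‖SK (η 0) - SK (v (0:ℤ))‖ ≤ ‖SK‖ * ‖η (0:ℤ) - v (0:ℤ)‖ := by
      rw [← map_sub]
      exact SK.le_opNorm _
    have b3 : ‖η (0:ℤ) - v (0:ℤ)‖ = u 0 := by
      simp only [hu_def, Nat.cast_zero]
      exact norm_sub_rev _ _
    rw [b3] at b2
    linarith
  -- final assembly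
  have hu0' : ‖v (0:ℤ) - η 0‖ = u 0 := by simp only [hu_def, Nat.cast_zero]
  have hsumu : ∑ t ∈ Finset.range (T + 1), ‖v (t:ℤ) - η (t:ℤ)‖
      = ∑ t ∈ Finset.range (T + 1), u t := by simp only [hu_def]
  have hsumδ : ∑ t ∈ Finset.Icc 1 T, ‖η (t:ℤ) - η ((t:ℤ) - 1)‖
      = ∑ t ∈ Finset.Icc 1 T, δ t := by simp only [hδ_def]
  rw [hsumu, hsumδ, hu0']
  have hUW : ∑ t ∈ Finset.range (T + 1), u t ≤ ∑ t ∈ Finset.range (T + 1), w t :=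
    Finset.sum_le_sum fun t _ => le_max_left _ _
  set SZ := ∑ t ∈ Finset.range (T + 1), ‖x t - SK (v (t:ℤ))‖ with hSZ_def
  set SU := ∑ t ∈ Finset.range (T + 1), u t with hSU_def
  set W := ∑ t ∈ Finset.range (T + 1), w t with hW_def
  set D := ∑ t ∈ Finset.Icc 1 T, δ t with hD_def
  set SΔ := ∑ t ∈ Finset.Icc 1 T, Δ t with hSΔ_def
  set X0 := ‖x 0 - SK (η 0)‖ with hX0_def
  set Z0 := ‖x 0 - SK (v (0:ℤ))‖ with hZ0_def
  set s := ‖SK‖ with hs_def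
  have hnum : (kx * SZ + kv * SU) * (ε * (1 - κ) * (1 - σ))
      ≤ kx * c * (ε * (1 - κ)) * X0
        + (2 * kx * c * s * (1 + ε * (1 - κ)) + kv * (1 - σ)) * u 0
        + (kx * c * s * (2 + ε * (1 - κ)) + kv * (1 - σ)) * D := by
    have h6 : kx * (ε * (1 - κ)) * ((1 - σ) * SZ)
        ≤ kx * (ε * (1 - κ)) * (c * Z0 + c * s * SΔ) :=
      mul_le_mul_of_nonneg_left hXsum (mul_nonneg hkx.le hεκ0.le)
    have h7 : kx * c * (ε * (1 - κ)) * Z0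
        ≤ kx * c * (ε * (1 - κ)) * (X0 + s * u 0) :=
      mul_le_mul_of_nonneg_left hZ0
        (mul_nonneg (mul_nonneg hkx.le hc0.le) hεκ0.le)
    have h8 : kx * c * s * (ε * (1 - κ)) * SΔ
        ≤ kx * c * s * (ε * (1 - κ)) * (2 * W) :=
      mul_le_mul_of_nonneg_left hΔIcc
        (mul_nonneg (mul_nonneg (mul_nonneg hkx.le hc0.le) hs0) hεκ0.le)
    have h9 : 2 * (kx * c * s) * (ε * (1 - κ) * W) ≤ 2 * (kx * c * s) * (u 0 + D) :=
      mul_le_mul_of_nonneg_left hWsum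
        (by positivity)
    have h10 : kv * (1 - σ) * (ε * (1 - κ) * W) ≤ kv * (1 - σ) * (u 0 + D) :=
      mul_le_mul_of_nonneg_left hWsum (mul_nonneg hkv.le h1σ.le)
    have h11 : kv * (ε * (1 - κ)) * (1 - σ) * SU ≤ kv * (ε * (1 - κ)) * (1 - σ) * W :=
      mul_le_mul_of_nonneg_left hUW
        (mul_nonneg (mul_nonneg hkv.le hεκ0.le) h1σ.le)
    have h12 : 0 ≤ kx * c * s * (ε * (1 - κ)) * u 0 :=
      mul_nonneg (mul_nonneg (mul_nonneg (mul_nonneg hkx.le hc0.le) hs0) hεκ0.le)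
        (hu_nn 0)
    have h13 : 0 ≤ kx * c * s * (ε * (1 - κ)) * D := by
      have hD_nn : 0 ≤ D := Finset.sum_nonneg fun t _ => hδ_nn t
      exact mul_nonneg (mul_nonneg (mul_nonneg (mul_nonneg hkx.le hc0.le) hs0)
        hεκ0.le) hD_nn
    linarith [h6, h7, h8, h9, h10, h11, h12, h13]
  have hdenom : (0:ℝ) < ε * (1 - κ) * (1 - σ) := mul_pos hεκ0 h1σ
  refine le_trans ((le_div_iff₀ hdenom).2 hnum) (le_of_eq ?_)
  field_simp
end

section
/- Recursive feasibility: suppose O ⊆ ℝ^m × ℝⁿ is convex, satisfies (v,e) ∈ O ⇒ (v, λ⁻¹ A_K e) ∈ O with λ ∈ (0,1), and (v,0) ∈ O for all v in a convex set S̄_v. If at time t-1 the pair (v_{t-1}, x_{t-1} - S_K v_{t-1}) ∈ O with v_{t-1} ∈ S̄_v, and x_t = A_K x_{t-1} + B v_{t-1} with A_K S_K = S_K - B (i.e., A_K S_K v = S_K v - B v for all v), then choosing α_t = 0 (v_t = v_{t-1}) yields (v_t, x_t - S_K v_t) ∈ O, so the reference governor optimization is feasible at time t. -/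
/-! The closed-loop error `x - S_K v` evolves by `A_K` when the reference `v` is held fixed,
so `(v, A_K e)` lies on the segment from `(v, 0)` to the point `(v, λ⁻¹ A_K e)` supplied by
the scaled invariance of `O`; convexity of `O` finishes. -/

lemma map_sub_eq_add_sub_of_map_comp {M N : Type*} [AddCommGroup M] [AddCommGroup N]
    (A : M →+ M) (B S : N → M) (hS : ∀ w, A (S w) = S w - B w) (x : M) (v : N) :
    A x + B v - S v = A (x - S v) := by
  rw [map_sub, hS]
  abel

lemma Convex.prodMk_mem_of_inv_smul_mem {𝕜 E F : Type*} [Field 𝕜] [LinearOrder 𝕜]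
    [IsStrictOrderedRing 𝕜] [AddCommGroup E] [Module 𝕜 E] [AddCommGroup F] [Module 𝕜 F]
    {O : Set (E × F)} (hO : Convex 𝕜 O) {c : 𝕜} (hc₀ : 0 < c) (hc₁ : c ≤ 1) {v : E} {e : F}
    (he : (v, c⁻¹ • e) ∈ O) (h0 : (v, 0) ∈ O) : (v, e) ∈ O := by
  have hseg := hO.add_smul_sub_mem h0 he ⟨hc₀.le, hc₁⟩
  rwa [Prod.mk_sub_mk, sub_self, sub_zero, Prod.smul_mk, smul_zero, smul_inv_smul₀ hc₀.ne',
    Prod.mk_add_mk, add_zero, zero_add] at hseg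

theorem stmt18_general {n m : ℕ}
    (AK : EuclideanSpace ℝ (Fin n) →L[ℝ] EuclideanSpace ℝ (Fin n))
    (B SK : EuclideanSpace ℝ (Fin m) →L[ℝ] EuclideanSpace ℝ (Fin n))
    (hSK : ∀ w, AK (SK w) = SK w - B w)
    (O : Set ((EuclideanSpace ℝ (Fin m)) × (EuclideanSpace ℝ (Fin n))))
    (hO : Convex ℝ O)
    (lam : ℝ) (hlam : lam ∈ Set.Ioo (0 : ℝ) 1)
    (Sbar : Set (EuclideanSpace ℝ (Fin m)))
    (hinv : ∀ v e, (v, e) ∈ O → (v, (1 / lam) • AK e) ∈ O)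
    (h0 : ∀ v ∈ Sbar, (v, (0 : EuclideanSpace ℝ (Fin n))) ∈ O)
    (vprev : EuclideanSpace ℝ (Fin m)) (hvprev : vprev ∈ Sbar)
    (xprev xt : EuclideanSpace ℝ (Fin n))
    (hmem : (vprev, xprev - SK vprev) ∈ O)
    (hxt : xt = AK xprev + B vprev) :
    (vprev, xt - SK vprev) ∈ O := by
  have herror : xt - SK vprev = AK (xprev - SK vprev) := by
    rw [hxt]
    exact map_sub_eq_add_sub_of_map_comp AK.toLinearMap.toAddMonoidHom B SK hSK xprev vprev
  rw [herror]
  refine hO.prodMk_mem_of_inv_smul_mem hlam.1 hlam.2.le ?_ (h0 vprev hvprev)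
  simpa only [one_div] using hinv _ _ hmem

/-- Recursive feasibility (Lemma 2): if `O` is convex, invariant under
`(v,e) ↦ (v, λ⁻¹ A_K e)`, `(v,0) ∈ O` for all `v ∈ S̄_v`, and at time `t-1` we have
`(v_{t-1}, x_{t-1} - S_K v_{t-1}) ∈ O` with `v_{t-1} ∈ S̄_v`,
`x_t = A_K x_{t-1} + B v_{t-1}` and `A_K S_K v = S_K v - B v`, then keeping
`v_t = v_{t-1}` (i.e. `α_t = 0`) gives `(v_t, x_t - S_K v_t) ∈ O`. -/
theorem stmt18 {n m : ℕ}
    (AK : EuclideanSpace ℝ (Fin n) →L[ℝ] EuclideanSpace ℝ (Fin n))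
    (B SK : EuclideanSpace ℝ (Fin m) →L[ℝ] EuclideanSpace ℝ (Fin n))
    (hSK : ∀ w, AK (SK w) = SK w - B w)
    (O : Set ((EuclideanSpace ℝ (Fin m)) × (EuclideanSpace ℝ (Fin n))))
    (hO : Convex ℝ O)
    (lam : ℝ) (hlam : lam ∈ Set.Ioo (0 : ℝ) 1)
    (Sbar : Set (EuclideanSpace ℝ (Fin m))) (hSbarConv : Convex ℝ Sbar)
    (hinv : ∀ v e, (v, e) ∈ O → (v, (1 / lam) • AK e) ∈ O)
    (h0 : ∀ v ∈ Sbar, (v, (0 : EuclideanSpace ℝ (Fin n))) ∈ O)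
    (vprev : EuclideanSpace ℝ (Fin m)) (hvprev : vprev ∈ Sbar)
    (xprev xt : EuclideanSpace ℝ (Fin n))
    (hmem : (vprev, xprev - SK vprev) ∈ O)
    (hxt : xt = AK xprev + B vprev) :
    (vprev, xt - SK vprev) ∈ O :=
  stmt18_general AK B SK hSK O hO lam hlam Sbar hinv h0 vprev hvprev xprev xt hmem hxt
end
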